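/- arXiv:1607.07387 — 2 statements merged into one kernel-verified Lean document; each statement's English description precedes it below -/
import Mathlib

section
/- Let q, d ≥ 1, k ≥ 1, m = q(d+1), and partition {1,…,m} into q consecutive blocks v(1),…,v(q) of size d+1. Let Δ^m_Ω = {λ ∈ ℝ^m : λ ≥ 0, Σ_a λ_a = 1, and λ_a λ_b = 0 whenever a and b lie in different blocks}. If {λ^1, …, λ^k} and {μ^1, …, μ^k} are two families of elements of Δ^m_Ω, each pairwise blockwise orthogonal (for all j ≠ j' and all s, λ^j_{v(s)} (λ^{j'}_{v(s)})ᵀ = 0 and likewise for the μ's), and Σ_{j=1}^k λ^j = Σ_{j=1}^k μ^j, then the two families coincide up to a permutation of the index set {1,…,k}; i.e., the map sending a pairwise blockwise orthogonal family to its sum is injective on unordered families. -/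
lemma stmt9_aux {q d k : ℕ} (f : Fin k → (Fin q × Fin (d + 1) → ℝ))
    (hsum : ∀ j, ∑ a, f j a = 1)
    (horth : ∀ j, ∀ a b : Fin q × Fin (d + 1), a.1 ≠ b.1 → f j a * f j b = 0)
    (hborth : ∀ j j' : Fin k, j ≠ j' →
      ∀ (s : Fin q) (i i' : Fin (d + 1)), f j (s, i) * f j' (s, i') = 0) :
    ∃ S : Fin k → Fin q, Function.Injective S ∧
      (∀ j a, a.1 ≠ S j → f j a = 0) ∧
      (∀ j i, (∑ j', f j' (S j, i)) = f j (S j, i)) := by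
  have hne : ∀ j, ∃ a, f j a ≠ 0 := by
    intro j
    by_contra h
    push_neg at h
    have := hsum j
    rw [Finset.sum_eq_zero (fun a _ => h a)] at this
    exact one_ne_zero this.symm
  choose a ha using hne
  refine ⟨fun j => (a j).1, ?_, ?_, ?_⟩
  case refine_2 =>
    intro j b hb
    have := horth j (a j) b (fun h => hb h.symm)
    exact (mul_eq_zero.mp this).resolve_left (ha j)
  all_goals
    have cross : ∀ j j' : Fin k, j' ≠ j → ∀ i, f j' ((a j).1, i) = 0 := by
      intro j j' hne i
      have := hborth j' j hne (a j).1 i (a j).2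
      have hnz : f j ((a j).1, (a j).2) ≠ 0 := ha j
      exact (mul_eq_zero.mp this).resolve_right hnz
  · intro j j' h
    by_contra hjj
    have := cross j' j hjj (a j).2
    have h' : (a j).1 = (a j').1 := h
    rw [← h'] at this
    exact ha j this
  · intro j i
    exact Finset.sum_eq_single j (fun j' _ h => cross j j' h i)
      (fun h => absurd (Finset.mem_univ j) h)

/-- the map `φ` is injective on unordered families.  Two pairwise blockwise
orthogonal families in `Δ^m_Ω` with the same sum coincide up to a permutation of `{1,…,k}`. -/
theorem stmt9 (q d k : ℕ) (hq : 1 ≤ q) (hd : 1 ≤ d) (hk : 1 ≤ k)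
    (lam μ : Fin k → (Fin q × Fin (d + 1) → ℝ))
    (hlpos : ∀ j a, 0 ≤ lam j a)
    (hlsum : ∀ j, ∑ a, lam j a = 1)
    (hlorth : ∀ j, ∀ a b : Fin q × Fin (d + 1), a.1 ≠ b.1 → lam j a * lam j b = 0)
    (hlborth : ∀ j j' : Fin k, j ≠ j' →
      ∀ (s : Fin q) (i i' : Fin (d + 1)), lam j (s, i) * lam j' (s, i') = 0)
    (hμpos : ∀ j a, 0 ≤ μ j a)
    (hμsum : ∀ j, ∑ a, μ j a = 1)
    (hμorth : ∀ j, ∀ a b : Fin q × Fin (d + 1), a.1 ≠ b.1 → μ j a * μ j b = 0)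
    (hμborth : ∀ j j' : Fin k, j ≠ j' →
      ∀ (s : Fin q) (i i' : Fin (d + 1)), μ j (s, i) * μ j' (s, i') = 0)
    (hsum : ∑ j, lam j = ∑ j, μ j) :
    ∃ π : Equiv.Perm (Fin k), ∀ j, μ (π j) = lam j := by
  obtain ⟨Sl, hSlinj, hlsupp, hlcol⟩ := stmt9_aux lam hlsum hlorth hlborth
  obtain ⟨Sm, hSminj, hμsupp, hμcol⟩ := stmt9_aux μ hμsum hμorth hμborth
  have hF : ∀ a, (∑ j, lam j a) = ∑ j, μ j a := by
    intro a
    have := congrFun hsum a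
    simpa using this
  -- lam j has total mass 1 concentrated on its block
  have hblocksum : ∀ j, ∑ i, lam j (Sl j, i) = 1 := by
    intro j
    have := hlsum j
    rw [Fintype.sum_prod_type] at this
    rw [Finset.sum_eq_single (Sl j)
      (fun s _ hs => Finset.sum_eq_zero fun i _ => hlsupp j (s, i) hs)
      (fun h => absurd (Finset.mem_univ _) h)] at this
    exact this
  -- for each j there is j' with Sm j' = Sl j
  have hmatch : ∀ j, ∃ j', Sm j' = Sl j := by
    intro j
    have h1 : (∑ i, ∑ j'', μ j'' (Sl j, i)) = 1 := by
      calc (∑ i, ∑ j'', μ j'' (Sl j, i))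
          = ∑ i, ∑ j'', lam j'' (Sl j, i) := by
            refine Finset.sum_congr rfl fun i _ => (hF (Sl j, i)).symm
        _ = ∑ i, lam j (Sl j, i) := Finset.sum_congr rfl fun i _ => hlcol j i
        _ = 1 := hblocksum j
    by_contra h
    push_neg at h
    have hz : ∀ j'' i, μ j'' (Sl j, i) = 0 := fun j'' i =>
      hμsupp j'' (Sl j, i) (fun he => h j'' he.symm)
    rw [Finset.sum_eq_zero (fun i _ => Finset.sum_eq_zero fun j'' _ => hz j'' i)] at h1
    exact one_ne_zero h1.symm
  choose π0 hπ0 using hmatch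
  have hπ0inj : Function.Injective π0 := by
    intro j j' h
    apply hSlinj
    rw [← hπ0 j, ← hπ0 j', h]
  have hbij : Function.Bijective π0 := Finite.injective_iff_bijective.mp hπ0inj
  refine ⟨Equiv.ofBijective π0 hbij, ?_⟩
  intro j
  funext a
  obtain ⟨s, i⟩ := a
  show μ (π0 j) (s, i) = lam j (s, i)
  by_cases hc : s = Sl j
  · subst hc
    have h1 : (∑ j', μ j' (Sl j, i)) = μ (π0 j) (Sl j, i) := by
      have := hμcol (π0 j) i
      rwa [hπ0 j] at this
    rw [← h1, ← hF (Sl j, i), hlcol j i]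
  · rw [hlsupp j (s, i) hc, hμsupp (π0 j) (s, i) (by rw [hπ0 j]; exact hc)]
end

section
/- Let q, d ≥ 1, n ≥ 1, and 1 ≤ k ≤ q, m = q(d+1), and partition {1,…,m} into q consecutive blocks v(1),…,v(q) of size d+1. Let Δ^m_Ω = {λ ∈ ℝ^m : λ ≥ 0, Σ_a λ_a = 1, and λ_a λ_b = 0 whenever a and b lie in different blocks}, and let W_1, …, W_n be symmetric m×m real matrices. Then the infimum of Σ_{i=1}^n λ_iᵀ W_i λ_i over all tuples (λ_*, λ_1, …, λ_n) with λ_* ≥ 0 componentwise, Σ_a (λ_*)_a = k, ⟨(λ_*)_{v(s)}, e⟩ · (λ_*)_{v(s)} = (λ_*)_{v(s)} for every s, and λ_i ∈ Δ^m_Ω with λ_i ≤ λ_* componentwise for every i, equals the infimum of Σ_{i=1}^n (λ^{σ(i)})ᵀ W_i λ^{σ(i)} over all pairwise blockwise orthogonal families λ^1, …, λ^k ∈ Δ^m_Ω (for all j ≠ j' and all s, λ^j_{v(s)} (λ^{j'}_{v(s)})ᵀ = 0) and all assignment maps σ : {1,…,n} → {1,…,k}. -/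
/-!
A feasible point `(λ_*, λ_1, …, λ_n)` of the relaxation has block sums of `λ_*` in `{0, 1}`
(the block condition makes each of them idempotent), and exactly `k` of them equal `1`.
Each `λ_i` lies in a single block with sum `1` and is dominated by `λ_*`, so it is the
restriction of `λ_*` to that block; these `k` restrictions are the blockwise orthogonal family.
Conversely, the sum of a blockwise orthogonal family is a feasible `λ_*`.
-/

open Matrix Finset

section BlockSimplex

variable {ι β : Type*}

def restrictBlock [DecidableEq ι] (v : ι × β → ℝ) (s : ι) : ι × β → ℝ :=
  fun b => if b.1 = s then v b else 0

def BlockOrthogonal (u v : ι × β → ℝ) : Prop := ∀ s i i', u (s, i) * v (s, i') = 0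

lemma blockOrthogonal_restrictBlock [DecidableEq ι] (w : ι × β → ℝ) {s t : ι} (hst : s ≠ t) :
    BlockOrthogonal (restrictBlock w s) (restrictBlock w t) := fun r i i' => by
  unfold restrictBlock
  split_ifs with hs ht <;> simp_all

variable [Fintype β]

def blockSum (v : ι × β → ℝ) (s : ι) : ℝ := ∑ i, v (s, i)

lemma blockSum_eq_zero_or_one {w : ι × β → ℝ}
    (hw : ∀ s i, blockSum w s * w (s, i) = w (s, i)) (s : ι) :
    blockSum w s = 0 ∨ blockSum w s = 1 :=
  IsIdempotentElem.iff_eq_zero_or_one.mp <| by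
    calc blockSum w s * blockSum w s = ∑ i, blockSum w s * w (s, i) := mul_sum _ _ _
      _ = blockSum w s := sum_congr rfl fun i _ => hw s i

variable [Fintype ι]

/-- The set `Δ^m_Ω`, with blocks indexed by `ι` and positions within a block by `β`. -/
def blockSimplex (ι β : Type*) [Fintype ι] [Fintype β] : Set (ι × β → ℝ) :=
  {v | (∀ a, 0 ≤ v a) ∧ ∑ a, v a = 1 ∧ ∀ a b : ι × β, a.1 ≠ b.1 → v a * v b = 0}

lemma sum_eq_sum_blockSum (v : ι × β → ℝ) : ∑ a, v a = ∑ s, blockSum v s :=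
  Fintype.sum_prod_type v

lemma exists_ne_zero_of_mem_blockSimplex {v : ι × β → ℝ} (hv : v ∈ blockSimplex ι β) :
    ∃ a, v a ≠ 0 := by
  by_contra! h
  simpa [h] using hv.2.1

lemma eq_zero_of_fst_ne_of_mem_blockSimplex {v : ι × β → ℝ} (hv : v ∈ blockSimplex ι β)
    {a b : ι × β} (ha : v a ≠ 0) (hb : b.1 ≠ a.1) : v b = 0 :=
  (mul_eq_zero.mp (hv.2.2 b a hb)).resolve_right ha

lemma blockSum_eq_one_of_mem_blockSimplex {v : ι × β → ℝ} (hv : v ∈ blockSimplex ι β)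
    {a : ι × β} (ha : v a ≠ 0) : blockSum v a.1 = 1 := by
  rw [← hv.2.1, sum_eq_sum_blockSum, sum_eq_single a.1]
  · exact fun s _ hs => sum_eq_zero fun i _ => eq_zero_of_fst_ne_of_mem_blockSimplex hv ha hs
  · simp

lemma card_blockSum_eq_one {w : ι × β → ℝ} {k : ℕ}
    (h01 : ∀ s, blockSum w s = 0 ∨ blockSum w s = 1) (hwk : ∑ a, w a = k) :
    Fintype.card {s // blockSum w s = 1} = k := by
  have hcount : ∑ s, blockSum w s = ∑ s, if blockSum w s = 1 then (1 : ℝ) else 0 :=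
    sum_congr rfl fun s _ => by rcases h01 s with h | h <;> simp [h]
  rw [← sum_eq_sum_blockSum, hwk, sum_boole] at hcount
  rw [Fintype.card_subtype]
  exact_mod_cast hcount.symm

lemma exists_eq_restrictBlock_of_le [DecidableEq ι] {v w : ι × β → ℝ}
    (hv : v ∈ blockSimplex ι β) (hvw : v ≤ w) (hw : ∀ s, blockSum w s ≤ 1) :
    ∃ s, blockSum w s = 1 ∧ v = restrictBlock w s := by
  obtain ⟨a, ha⟩ := exists_ne_zero_of_mem_blockSimplex hv
  have hva : blockSum v a.1 = 1 := blockSum_eq_one_of_mem_blockSimplex hv ha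
  have hwa : blockSum w a.1 = 1 :=
    le_antisymm (hw a.1) (hva ▸ sum_le_sum fun i _ => hvw (a.1, i))
  have hgap : ∑ i, (w (a.1, i) - v (a.1, i)) = 0 := by
    rw [sum_sub_distrib]
    exact sub_eq_zero.mpr (hwa.trans hva.symm)
  have hblock : ∀ i, v (a.1, i) = w (a.1, i) := fun i => by
    linarith [(sum_eq_zero_iff_of_nonneg fun i _ => sub_nonneg.mpr (hvw (a.1, i))).mp hgap i
      (mem_univ i)]
  refine ⟨a.1, hwa, funext fun b => ?_⟩
  by_cases hb : b.1 = a.1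
  · obtain ⟨s, i⟩ := b
    subst hb
    simp [restrictBlock, hblock]
  · rw [restrictBlock, if_neg hb]
    exact eq_zero_of_fst_ne_of_mem_blockSimplex hv ha hb

lemma restrictBlock_mem_blockSimplex [DecidableEq ι] {w : ι × β → ℝ} (hw : ∀ a, 0 ≤ w a)
    {s : ι} (hs : blockSum w s = 1) : restrictBlock w s ∈ blockSimplex ι β := by
  refine ⟨fun a => ?_, ?_, fun a b hab => ?_⟩
  · unfold restrictBlock
    split_ifs
    exacts [hw a, le_rfl]
  · rw [sum_eq_sum_blockSum, sum_eq_single s]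
    · simpa [blockSum, restrictBlock] using hs
    · exact fun t _ ht => sum_eq_zero fun i _ => if_neg ht
    · simp
  · unfold restrictBlock
    split_ifs with ha hb <;> simp_all

lemma exists_blockOrthogonal_family_of_le [DecidableEq ι] {κ : Type*} {k : ℕ}
    {w : ι × β → ℝ} (hw0 : ∀ a, 0 ≤ w a) (hwk : ∑ a, w a = k)
    (hw : ∀ s i, blockSum w s * w (s, i) = w (s, i))
    {lam : κ → ι × β → ℝ} (hlam : ∀ i, lam i ∈ blockSimplex ι β) (hle : ∀ i, lam i ≤ w) :
    ∃ (lamJ : Fin k → ι × β → ℝ) (σ : κ → Fin k), (∀ j, lamJ j ∈ blockSimplex ι β) ∧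
      (∀ j j', j ≠ j' → BlockOrthogonal (lamJ j) (lamJ j')) ∧ ∀ i, lam i = lamJ (σ i) := by
  have h01 := blockSum_eq_zero_or_one hw
  let e : Fin k ≃ {s // blockSum w s = 1} :=
    (Fintype.equivFinOfCardEq (card_blockSum_eq_one h01 hwk)).symm
  have hw1 : ∀ s, blockSum w s ≤ 1 := fun s => by rcases h01 s with h | h <;> simp [h]
  choose s hs hlam_eq using fun i => exists_eq_restrictBlock_of_le (hlam i) (hle i) hw1
  refine ⟨fun j => restrictBlock w (e j), fun i => e.symm ⟨s i, hs i⟩,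
    fun j => restrictBlock_mem_blockSimplex hw0 (e j).2,
    fun j j' hjj' => blockOrthogonal_restrictBlock w fun h => hjj' (e.injective (Subtype.ext h)),
    fun i => by simp [hlam_eq i]⟩

lemma blockSum_sum_mul_eq_self {κ : Type*} [Fintype κ] {lamJ : κ → ι × β → ℝ}
    (hJ : ∀ j, lamJ j ∈ blockSimplex ι β)
    (horth : ∀ j j', j ≠ j' → BlockOrthogonal (lamJ j) (lamJ j')) (s : ι) (i : β) :
    blockSum (fun a => ∑ j, lamJ j a) s * ∑ j, lamJ j (s, i) = ∑ j, lamJ j (s, i) := by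
  by_cases hzero : ∀ j, lamJ j (s, i) = 0
  · simp [hzero]
  obtain ⟨j₀, hj₀⟩ := not_forall.mp hzero
  have hothers : ∀ j ≠ j₀, ∀ i', lamJ j (s, i') = 0 := fun j hj i' =>
    (mul_eq_zero.mp (horth j j₀ hj s i' i)).resolve_right hj₀
  have hblock : blockSum (fun a => ∑ j, lamJ j a) s = 1 := by
    calc blockSum (fun a => ∑ j, lamJ j a) s = blockSum (lamJ j₀) s :=
          sum_congr rfl fun i' _ => sum_eq_single j₀ (fun j _ hj => hothers j hj i') (by simp)
      _ = 1 := blockSum_eq_one_of_mem_blockSimplex (hJ j₀) hj₀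
  rw [hblock, one_mul]

end BlockSimplex

theorem stmt14_general (q d n k : ℕ)
    (W : Fin n → Matrix (Fin q × Fin (d + 1)) (Fin q × Fin (d + 1)) ℝ) :
    sInf {r : ℝ | ∃ (lamStar : Fin q × Fin (d + 1) → ℝ)
        (lam : Fin n → (Fin q × Fin (d + 1) → ℝ)),
        (∀ a, 0 ≤ lamStar a) ∧
        (∑ a, lamStar a = (k : ℝ)) ∧
        (∀ (s : Fin q) (i : Fin (d + 1)),
          (∑ i' : Fin (d + 1), lamStar (s, i')) * lamStar (s, i) = lamStar (s, i)) ∧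
        (∀ i, ∀ a, 0 ≤ lam i a) ∧
        (∀ i, ∑ a, lam i a = 1) ∧
        (∀ i, ∀ a b : Fin q × Fin (d + 1), a.1 ≠ b.1 → lam i a * lam i b = 0) ∧
        (∀ i, ∀ a, lam i a ≤ lamStar a) ∧
        r = ∑ i, lam i ⬝ᵥ (W i).mulVec (lam i)} =
    sInf {r : ℝ | ∃ (lamJ : Fin k → (Fin q × Fin (d + 1) → ℝ)) (σ : Fin n → Fin k),
        (∀ j a, 0 ≤ lamJ j a) ∧
        (∀ j, ∑ a, lamJ j a = 1) ∧
        (∀ j, ∀ a b : Fin q × Fin (d + 1), a.1 ≠ b.1 → lamJ j a * lamJ j b = 0) ∧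
        (∀ j j' : Fin k, j ≠ j' →
          ∀ (s : Fin q) (i i' : Fin (d + 1)), lamJ j (s, i) * lamJ j' (s, i') = 0) ∧
        r = ∑ i, lamJ (σ i) ⬝ᵥ (W i).mulVec (lamJ (σ i))} := by
  congr 1
  ext r
  constructor
  · rintro ⟨w, lam, hw0, hwk, hw, hlam0, hlam1, hlamΩ, hle, rfl⟩
    obtain ⟨lamJ, σ, hJ, horth, hlam⟩ := exists_blockOrthogonal_family_of_le hw0 hwk hw
      (fun i => ⟨hlam0 i, hlam1 i, hlamΩ i⟩) hle
    exact ⟨lamJ, σ, fun j => (hJ j).1, fun j => (hJ j).2.1, fun j => (hJ j).2.2, horth,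
      by simp only [hlam]⟩
  · rintro ⟨lamJ, σ, hJ0, hJ1, hJΩ, horth, rfl⟩
    have hJ : ∀ j, lamJ j ∈ blockSimplex (Fin q) (Fin (d + 1)) := fun j => ⟨hJ0 j, hJ1 j, hJΩ j⟩
    refine ⟨fun a => ∑ j, lamJ j a, fun i => lamJ (σ i), fun a => sum_nonneg fun j _ => hJ0 j a,
      by rw [sum_comm]; simp [hJ1], blockSum_sum_mul_eq_self hJ horth,
      fun i => hJ0 (σ i), fun i => hJ1 (σ i), fun i => hJΩ (σ i),
      fun i a => single_le_sum (fun j _ => hJ0 j a) (mem_univ (σ i)), rfl⟩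

/-- equivalence of (R2) with the separated form of (R1),
Corollary `R2equivalence`.  The infimum of `Σ_i λ_iᵀ W_i λ_i` over feasible points of (R2)
equals the infimum over pairwise blockwise orthogonal families `λ^1, …, λ^k ∈ Δ^m_Ω` together
with assignment maps `σ : [n] → [k]` of `Σ_i (λ^{σ(i)})ᵀ W_i λ^{σ(i)}`. -/
theorem stmt14 (q d n k : ℕ) (hq : 1 ≤ q) (hd : 1 ≤ d) (hn : 1 ≤ n)
    (hk1 : 1 ≤ k) (hkq : k ≤ q)
    (W : Fin n → Matrix (Fin q × Fin (d + 1)) (Fin q × Fin (d + 1)) ℝ)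
    (hW : ∀ i, (W i).IsSymm) :
    sInf {r : ℝ | ∃ (lamStar : Fin q × Fin (d + 1) → ℝ)
        (lam : Fin n → (Fin q × Fin (d + 1) → ℝ)),
        (∀ a, 0 ≤ lamStar a) ∧
        (∑ a, lamStar a = (k : ℝ)) ∧
        (∀ (s : Fin q) (i : Fin (d + 1)),
          (∑ i' : Fin (d + 1), lamStar (s, i')) * lamStar (s, i) = lamStar (s, i)) ∧
        (∀ i, ∀ a, 0 ≤ lam i a) ∧
        (∀ i, ∑ a, lam i a = 1) ∧
        (∀ i, ∀ a b : Fin q × Fin (d + 1), a.1 ≠ b.1 → lam i a * lam i b = 0) ∧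
        (∀ i, ∀ a, lam i a ≤ lamStar a) ∧
        r = ∑ i, lam i ⬝ᵥ (W i).mulVec (lam i)} =
    sInf {r : ℝ | ∃ (lamJ : Fin k → (Fin q × Fin (d + 1) → ℝ)) (σ : Fin n → Fin k),
        (∀ j a, 0 ≤ lamJ j a) ∧
        (∀ j, ∑ a, lamJ j a = 1) ∧
        (∀ j, ∀ a b : Fin q × Fin (d + 1), a.1 ≠ b.1 → lamJ j a * lamJ j b = 0) ∧
        (∀ j j' : Fin k, j ≠ j' →
          ∀ (s : Fin q) (i i' : Fin (d + 1)), lamJ j (s, i) * lamJ j' (s, i') = 0) ∧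
        r = ∑ i, lamJ (σ i) ⬝ᵥ (W i).mulVec (lamJ (σ i))} :=
  stmt14_general q d n k W
end
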